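/- For a finite nonempty polyomino P contained in a w×h rectangle (its minimal bounding rectangle), the boundary ∂P — the set of tiles of P that are 4-adjacent to an empty pixel or form a diagonal pair with an empty pixel — has cardinality at least max(w,h). -/

import Mathlib

def Adj (p q : ℤ × ℤ) : Prop := |p.1 - q.1| + |p.2 - q.2| = 1

def DiagPair (p q : ℤ × ℤ) : Prop := |p.1 - q.1| = 1 ∧ |p.2 - q.2| = 1

def ConnectedVia (P : Set (ℤ × ℤ)) (R : ℤ × ℤ → ℤ × ℤ → Prop) : Prop :=
  ∀ p ∈ P, ∀ q ∈ P, Relation.ReflTransGen (fun a b => a ∈ P ∧ b ∈ P ∧ R a b) p q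

/-- The boundary of `P`: tiles adjacent (or diagonal) to an empty pixel. -/
def Boundary (P : Finset (ℤ × ℤ)) : Set (ℤ × ℤ) :=
  {p | p ∈ P ∧ ∃ q, q ∉ P ∧ (Adj p q ∨ DiagPair p q)}

/-!
A 4-connected polyomino meets every column of its bounding rectangle, since a path of unit
steps cannot skip a column. In each column the topmost tile has an empty pixel directly above
it, so it lies on the boundary; these tiles are distinct, giving `w` boundary tiles. Rows and
rightmost tiles give `h` of them in the same way.
-/

/-- Discrete intermediate value theorem. -/
lemma exists_mem_apply_eq_of_reflTransGen {α : Type*} {S : Set α} {R : α → α → Prop}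
    (f : α → ℤ) (hf : ∀ a b, R a b → f b ≤ f a + 1) {a b : α}
    (hab : Relation.ReflTransGen (fun p q => p ∈ S ∧ q ∈ S ∧ R p q) a b) (ha : a ∈ S)
    {x : ℤ} (hax : f a ≤ x) (hxb : x ≤ f b) : ∃ c ∈ S, f c = x := by
  induction hab with
  | refl => exact ⟨a, ha, le_antisymm hax hxb⟩
  | @tail c d _ hcd ih =>
    by_cases hxc : x ≤ f c
    · exact ih hxc
    · exact ⟨d, hcd.2.1, by have := hf c d hcd.2.2; omega⟩

lemma Adj.fst_le {p q : ℤ × ℤ} (h : Adj p q) : q.1 ≤ p.1 + 1 := by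
  have := abs_nonneg (p.2 - q.2)
  have := neg_abs_le (p.1 - q.1)
  unfold Adj at h
  linarith

lemma Adj.snd_le {p q : ℤ × ℤ} (h : Adj p q) : q.2 ≤ p.2 + 1 := by
  have := abs_nonneg (p.1 - q.1)
  have := neg_abs_le (p.2 - q.2)
  unfold Adj at h
  linarith

lemma adj_add_right (p : ℤ × ℤ) : Adj p (p + (1, 0)) := by simp [Adj]

lemma adj_add_up (p : ℤ × ℤ) : Adj p (p + (0, 1)) := by simp [Adj]

section Coordinate

variable {P : Finset (ℤ × ℤ)} (f g : ℤ × ℤ → ℤ) (v : ℤ × ℤ)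

/-- If stepping by `v` is an adjacency that keeps `f` and raises `g`, then the tile of
`P` maximising `g` on a level set of `f` has an empty neighbour at `+ v`. -/
lemma exists_mem_boundary_apply_eq (hv : ∀ p, Adj p (p + v)) (hfv : ∀ p, f (p + v) = f p)
    (hgv : ∀ p, g p < g (p + v)) {r : ℤ × ℤ} (hr : r ∈ P) :
    ∃ p ∈ Boundary P, f p = f r := by
  obtain ⟨p, hp, hmax⟩ :=
    (P.filter (f · = f r)).exists_max_image g ⟨r, Finset.mem_filter.mpr ⟨hr, rfl⟩⟩
  obtain ⟨hpP, hpr⟩ := Finset.mem_filter.mp hp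
  refine ⟨p, ⟨hpP, p + v, fun hpv => ?_, Or.inl (hv p)⟩, hpr⟩
  have := hmax (p + v) (Finset.mem_filter.mpr ⟨hpv, (hfv p).trans hpr⟩)
  exact (hgv p).not_ge this

lemma extent_le_ncard_boundary (hne : P.Nonempty) (hconn : ConnectedVia ↑P Adj)
    (hf : ∀ p q, Adj p q → f q ≤ f p + 1) (hv : ∀ p, Adj p (p + v))
    (hfv : ∀ p, f (p + v) = f p) (hgv : ∀ p, g p < g (p + v)) :
    (P.image f).max' (hne.image f) - (P.image f).min' (hne.image f) + 1
      ≤ (Boundary P).ncard := by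
  set m := (P.image f).min' (hne.image f)
  set M := (P.image f).max' (hne.image f)
  obtain ⟨a, haP, ha⟩ := Finset.mem_image.mp ((P.image f).min'_mem (hne.image f))
  obtain ⟨b, hbP, hb⟩ := Finset.mem_image.mp ((P.image f).max'_mem (hne.image f))
  have hIcc : Set.Icc m M ⊆ f '' Boundary P := by
    rintro x ⟨hmx, hxM⟩
    obtain ⟨r, hr, rfl⟩ := exists_mem_apply_eq_of_reflTransGen f hf (hconn a haP b hbP) haP
      (x := x) (by rw [ha]; exact hmx) (by rw [hb]; exact hxM)
    exact exists_mem_boundary_apply_eq f g v hv hfv hgv hr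
  have hfin : (Boundary P).Finite := P.finite_toSet.subset fun p hp => hp.1
  have hcard : (Set.Icc m M).ncard ≤ (Boundary P).ncard :=
    (Set.ncard_le_ncard hIcc (hfin.image f)).trans (Set.ncard_image_le hfin)
  rw [← Finset.coe_Icc, Set.ncard_coe_finset, Int.card_Icc] at hcard
  omega

end Coordinate

/-- For a finite nonempty 4-connected polyomino in a minimal `w × h` bounding
rectangle, the boundary has at least `max w h` tiles. -/
theorem stmt_2 (P : Finset (ℤ × ℤ)) (hne : P.Nonempty)
    (hconn : ConnectedVia ↑P Adj) (w h : ℕ)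
    (hw : (w : ℤ) = (P.image Prod.fst).max' (hne.image _)
        - (P.image Prod.fst).min' (hne.image _) + 1)
    (hh : (h : ℤ) = (P.image Prod.snd).max' (hne.image _)
        - (P.image Prod.snd).min' (hne.image _) + 1) :
    max w h ≤ (Boundary P).ncard := by
  have hwidth := extent_le_ncard_boundary Prod.fst Prod.snd (0, 1) hne hconn
    (fun _ _ => Adj.fst_le) adj_add_up (fun _ => by simp) (fun _ => by simp)
  have hheight := extent_le_ncard_boundary Prod.snd Prod.fst (1, 0) hne hconn
    (fun _ _ => Adj.snd_le) adj_add_right (fun _ => by simp) (fun _ => by simp)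
  omega
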